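/- Define F(S) = ‖A - P^{(S)} A‖_F². Then for any P ⊂ S, F(S) = F(P) - ‖Ẽ_R‖_F², where E = A - P^{(P)} A, R = S \ P, and Ẽ_R = R^{(R)} E is the low-rank approximation of E based on its columns in R. -/

import Mathlib

/-!
Write `Π_C := C (CᵀC)⁻¹ Cᵀ`, `E := A - Π_P A` and `Q := Π_{E_R}`. Since `E` is orthogonal to
the columns of `A_P`, so is `E_R`, hence `Π_P Q = 0` and `Π_P + Q` is again an orthogonal
projection. It fixes every column of `A_S` (on `P` because `E_P = 0`, on `R` because
`Q E_R = E_R`), and its range lies in the span of `A_S`; hence `Π_S = Π_P + Q`. Then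
`A - Π_S A = E - Q E`, and Pythagoras for the orthogonal decomposition `E = (E - Q E) + Q E`
gives the claim.
-/

open Matrix BigOperators

noncomputable section

/-- The submatrix of `A` consisting of the columns indexed by `S`. -/
def cols {m n : ℕ} (A : Matrix (Fin m) (Fin n) ℝ) (S : Finset (Fin n)) :
    Matrix (Fin m) {j // j ∈ S} ℝ :=
  Matrix.of fun i j => A i j.1

/-- Orthogonal projection matrix onto the column span of `C`,
`C (Cᵀ C)⁻¹ Cᵀ`. -/
def projM {m : ℕ} {k : Type} [Fintype k] [DecidableEq k]
    (C : Matrix (Fin m) k ℝ) : Matrix (Fin m) (Fin m) ℝ :=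
  C * (Cᵀ * C)⁻¹ * Cᵀ

/-- Squared Frobenius norm. -/
def frobSq {a b : Type} [Fintype a] [Fintype b] (A : Matrix a b ℝ) : ℝ :=
  ∑ i, ∑ j, (A i j) ^ 2

section Projection

variable {m : ℕ} {k : Type} [Fintype k] [DecidableEq k]

lemma projM_isSymm (C : Matrix (Fin m) k ℝ) : (projM C).IsSymm := by
  simp [Matrix.IsSymm, projM, transpose_mul, transpose_nonsing_inv, Matrix.mul_assoc]

lemma mul_projM {l : Type} [Fintype l] (M : Matrix l (Fin m) ℝ) (C : Matrix (Fin m) k ℝ) :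
    M * projM C = M * C * (Cᵀ * C)⁻¹ * Cᵀ := by
  simp only [projM, Matrix.mul_assoc]

lemma projM_mul_self {C : Matrix (Fin m) k ℝ} (hC : IsUnit (Cᵀ * C)) : projM C * C = C := by
  rw [projM, Matrix.mul_assoc, Matrix.mul_assoc,
    nonsing_inv_mul _ ((isUnit_iff_isUnit_det _).mp hC), Matrix.mul_one]

lemma transpose_mul_projM {C : Matrix (Fin m) k ℝ} (hC : IsUnit (Cᵀ * C)) :
    Cᵀ * projM C = Cᵀ := by
  rw [mul_projM, mul_nonsing_inv _ ((isUnit_iff_isUnit_det _).mp hC), Matrix.one_mul]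

lemma mul_projM_of_mul_eq_self {M : Matrix (Fin m) (Fin m) ℝ} {C : Matrix (Fin m) k ℝ}
    (h : M * C = C) : M * projM C = projM C := by
  rw [mul_projM, h, projM]

lemma projM_idem {C : Matrix (Fin m) k ℝ} (hC : IsUnit (Cᵀ * C)) :
    projM C * projM C = projM C :=
  mul_projM_of_mul_eq_self (projM_mul_self hC)

lemma transpose_mul_sub_projM_mul {n : ℕ} {C : Matrix (Fin m) k ℝ} (hC : IsUnit (Cᵀ * C))
    (A : Matrix (Fin m) (Fin n) ℝ) : Cᵀ * (A - projM C * A) = 0 := by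
  rw [Matrix.mul_sub, ← Matrix.mul_assoc, transpose_mul_projM hC, sub_self]

lemma projM_mul_projM_eq_zero {k' : Type} [Fintype k'] [DecidableEq k']
    {C : Matrix (Fin m) k ℝ} {D : Matrix (Fin m) k' ℝ} (h : Cᵀ * D = 0) :
    projM C * projM D = 0 := by
  have : projM C * projM D = C * (Cᵀ * C)⁻¹ * (Cᵀ * D) * (Dᵀ * D)⁻¹ * Dᵀ := by
    simp only [projM, Matrix.mul_assoc]
  rw [this, h, Matrix.mul_zero, Matrix.zero_mul, Matrix.zero_mul]

lemma projM_eq_of_isSymm {M : Matrix (Fin m) (Fin m) ℝ} {C : Matrix (Fin m) k ℝ}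
    (hM : M.IsSymm) (hMC : M * C = C) (hCM : projM C * M = M) : projM C = M := by
  have h : M * projM C = projM C := mul_projM_of_mul_eq_self hMC
  have h' := congrArg transpose h
  rw [transpose_mul, hM.eq, (projM_isSymm C).eq] at h'
  rw [← h', hCM]

end Projection

lemma frobSq_eq_trace {a b : Type} [Fintype a] [Fintype b] (X : Matrix a b ℝ) :
    frobSq X = trace (Xᵀ * X) := by
  simp only [frobSq, trace, diag, mul_apply, transpose_apply, sq]
  exact Finset.sum_comm

lemma frobSq_sub_mul_of_isSymm_of_idem {a b : Type} [Fintype a] [Fintype b]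
    {Q : Matrix a a ℝ} (hQ : Q.IsSymm) (hQQ : Q * Q = Q) (E : Matrix a b ℝ) :
    frobSq (E - Q * E) = frobSq E - frobSq (Q * E) := by
  have hQtQ : (Q * E)ᵀ * (Q * E) = Eᵀ * (Q * E) := by
    rw [transpose_mul, hQ.eq, Matrix.mul_assoc, ← Matrix.mul_assoc Q, hQQ]
  have hQt : (Q * E)ᵀ * E = Eᵀ * (Q * E) := by
    rw [transpose_mul, hQ.eq, Matrix.mul_assoc]
  rw [frobSq_eq_trace, frobSq_eq_trace, frobSq_eq_trace, transpose_sub, Matrix.sub_mul,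
    Matrix.mul_sub, Matrix.mul_sub, hQtQ, hQt]
  simp only [trace_sub]
  ring

section Columns

variable {m n : ℕ}

lemma mul_cols_eq_zero {l : Type} {M : Matrix l (Fin m) ℝ} {A : Matrix (Fin m) (Fin n) ℝ}
    (h : M * A = 0) (S : Finset (Fin n)) : M * cols A S = 0 := by
  ext i j
  simpa [cols, mul_apply] using congrFun (congrFun h i) j.1

lemma mul_cols {l : ℕ} (M : Matrix (Fin l) (Fin m) ℝ) (A : Matrix (Fin m) (Fin n) ℝ)
    (S : Finset (Fin n)) : M * cols A S = cols (M * A) S := by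
  ext i j
  simp [cols, mul_apply]

lemma cols_eq_cols_iff {A B : Matrix (Fin m) (Fin n) ℝ} {S : Finset (Fin n)} :
    cols A S = cols B S ↔ ∀ i, ∀ j ∈ S, A i j = B i j := by
  constructor
  · intro h i j hj
    exact congrFun (congrFun h i) ⟨j, hj⟩
  · intro h
    ext i j
    exact h i j j.2

lemma mul_cols_eq_self_iff {M : Matrix (Fin m) (Fin m) ℝ} {A : Matrix (Fin m) (Fin n) ℝ}
    {S : Finset (Fin n)} : M * cols A S = cols A S ↔ ∀ i, ∀ j ∈ S, (M * A) i j = A i j := by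
  rw [mul_cols, cols_eq_cols_iff]

lemma projM_cols_residual_mul_projM {k : Type} [Fintype k] [DecidableEq k]
    {C : Matrix (Fin m) k ℝ} (hC : IsUnit (Cᵀ * C)) (A : Matrix (Fin m) (Fin n) ℝ)
    (T : Finset (Fin n)) : projM (cols (A - projM C * A) T) * projM C = 0 := by
  have h := congrArg transpose
    (projM_mul_projM_eq_zero (mul_cols_eq_zero (transpose_mul_sub_projM_mul hC A) T))
  rwa [transpose_mul, (projM_isSymm _).eq, (projM_isSymm _).eq, transpose_zero] at h

lemma projM_cols_eq_add {A : Matrix (Fin m) (Fin n) ℝ} {S P : Finset (Fin n)} (hPS : P ⊆ S)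
    (hS : IsUnit ((cols A S)ᵀ * cols A S)) (hP : IsUnit ((cols A P)ᵀ * cols A P))
    (hR : IsUnit ((cols (A - projM (cols A P) * A) (S \ P))ᵀ *
      cols (A - projM (cols A P) * A) (S \ P))) :
    projM (cols A S) =
      projM (cols A P) + projM (cols (A - projM (cols A P) * A) (S \ P)) := by
  set projP := projM (cols A P)
  set E := A - projP * A with hE
  set Q := projM (cols E (S \ P))
  have hQA : Q * A = Q * E := by
    rw [hE, Matrix.mul_sub, ← Matrix.mul_assoc, projM_cols_residual_mul_projM hP,
      Matrix.zero_mul, sub_zero]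
  have hEP : ∀ i, ∀ j ∈ P, E i j = 0 := fun i j hj =>
    sub_eq_zero.mpr (mul_cols_eq_self_iff.mp (projM_mul_self hP) i j hj).symm
  have hQE : ∀ i, ∀ j ∈ S, (Q * E) i j = E i j := by
    intro i j hj
    by_cases hjP : j ∈ P
    · simp [mul_apply, hEP _ j hjP]
    · exact mul_cols_eq_self_iff.mp (projM_mul_self hR) i j (Finset.mem_sdiff.mpr ⟨hj, hjP⟩)
  have hfix : (projP + Q) * cols A S = cols A S := by
    refine mul_cols_eq_self_iff.mpr fun i j hj => ?_
    rw [Matrix.add_mul, hQA, Matrix.add_apply, hQE i j hj, hE, Matrix.sub_apply]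
    ring
  have hprojS : ∀ i, ∀ j ∈ S, (projM (cols A S) * A) i j = A i j :=
    mul_cols_eq_self_iff.mp (projM_mul_self hS)
  have hSP : projM (cols A S) * projP = projP :=
    mul_projM_of_mul_eq_self (mul_cols_eq_self_iff.mpr fun i j hj => hprojS i j (hPS hj))
  have hSQ : projM (cols A S) * Q = Q := by
    refine mul_projM_of_mul_eq_self ?_
    rw [mul_cols, cols_eq_cols_iff]
    intro i j hj
    rw [hE, Matrix.mul_sub, ← Matrix.mul_assoc, hSP, Matrix.sub_apply, Matrix.sub_apply,
      hprojS i j (Finset.mem_sdiff.mp hj).1]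
  exact projM_eq_of_isSymm ((projM_isSymm _).add (projM_isSymm _)) hfix
    (by rw [Matrix.mul_add, hSP, hSQ])

end Columns

theorem stmt7 {m n : ℕ} (A : Matrix (Fin m) (Fin n) ℝ) (S P : Finset (Fin n))
    (hPS : P ⊂ S)
    (hS : IsUnit ((cols A S)ᵀ * cols A S))
    (hP : IsUnit ((cols A P)ᵀ * cols A P))
    (hR : IsUnit ((cols (A - projM (cols A P) * A) (S \ P))ᵀ *
      cols (A - projM (cols A P) * A) (S \ P))) :
    frobSq (A - projM (cols A S) * A) =
      frobSq (A - projM (cols A P) * A) -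
        frobSq (projM (cols (A - projM (cols A P) * A) (S \ P)) *
          (A - projM (cols A P) * A)) := by
  set E := A - projM (cols A P) * A with hE
  set Q := projM (cols E (S \ P))
  have hres : A - projM (cols A S) * A = E - Q * E := by
    rw [projM_cols_eq_add hPS.subset hS hP hR, Matrix.add_mul, hE, Matrix.mul_sub (M := Q),
      ← Matrix.mul_assoc Q, projM_cols_residual_mul_projM hP, Matrix.zero_mul, sub_zero]
    abel
  rw [hres]
  exact frobSq_sub_mul_of_isSymm_of_idem (projM_isSymm _) (projM_idem hR) E
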